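/- arXiv:1807.04261 — 2 statements merged into one kernel-verified Lean document; each statement's English description precedes it below -/
import Mathlib

section
/- Fix 0 < ε < d⁻⁴·(1/(16π))² and let d ≥ 2. Suppose W_i ∈ ℝ^{n_i×n_{i−1}} satisfies the Weight Distribution Condition with constant ε for i = 1,…,d. Then for all nonzero x, y ∈ ℝ^k, writing x_d := (Π_{i=d}^1 W_{i,+,x})·x and y_d := (Π_{i=d}^1 W_{i,+,y})·y, we have | ‖y_d‖/‖x_d‖ − ‖y‖/‖x‖ | ≤ 8·d·ε·‖y‖/‖x‖. -/
open Real Filter Set MeasureTheory ProbabilityTheory Matrix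
open scoped Classical BigOperators NNReal ENNReal

noncomputable section

namespace DPR

/-- Euclidean dot product on `Fin n → ℝ`. -/
def dotp {n : ℕ} (u v : Fin n → ℝ) : ℝ := ∑ i, u i * v i

/-- Euclidean norm on `Fin n → ℝ`. -/
def nrm {n : ℕ} (v : Fin n → ℝ) : ℝ := Real.sqrt (dotp v v)

/-- Angle between two vectors. -/
def angl {n : ℕ} (u v : Fin n → ℝ) : ℝ := Real.arccos (dotp u v / (nrm u * nrm v))

/-- Spectral norm of a matrix: the operator norm of the induced map between
Euclidean spaces. -/
def specNorm {a b : ℕ} (M : Matrix (Fin a) (Fin b) ℝ) : ℝ :=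
  ‖LinearMap.toContinuousLinearMap (Matrix.toEuclideanLin M)‖

/-- The symmetric matrix `M_{x̂↔ŷ}` sending `x̂ ↦ ŷ`, `ŷ ↦ x̂` and vanishing on
`span{x,y}ᗮ`. -/
def swapMat {n : ℕ} (x y : Fin n → ℝ) : Matrix (Fin n) (Fin n) ℝ :=
  let u := (nrm x)⁻¹ • x
  let v := (nrm y)⁻¹ • y
  let c := dotp u v
  let w := v - c • u
  if dotp w w = 0 then c • Matrix.vecMulVec u u
  else
    c • Matrix.vecMulVec u u + Matrix.vecMulVec u w + Matrix.vecMulVec w u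
      - (c / dotp w w) • Matrix.vecMulVec w w

/-- `Q_{x,y} = ((π − θ)/(2π))·I + (sin θ/(2π))·M_{x̂↔ŷ}`. -/
def Qmat {k : ℕ} (x y : Fin k → ℝ) : Matrix (Fin k) (Fin k) ℝ :=
  ((π - angl x y) / (2 * π)) • (1 : Matrix (Fin k) (Fin k) ℝ)
    + (Real.sin (angl x y) / (2 * π)) • swapMat x y

/-- `Φ_{z,w} = ((π − 2θ)/π)·I + (2 sin θ/π)·M_{ẑ↔ŵ}`. -/
def Phi {n : ℕ} (z w : Fin n → ℝ) : Matrix (Fin n) (Fin n) ℝ :=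
  ((π - 2 * angl z w) / π) • (1 : Matrix (Fin n) (Fin n) ℝ)
    + (2 * Real.sin (angl z w) / π) • swapMat z w

/-- `W_{+,v} = diag(1_{Wv>0})·W`. -/
def posPart {a b : ℕ} (W : Matrix (Fin a) (Fin b) ℝ) (v : Fin b → ℝ) :
    Matrix (Fin a) (Fin b) ℝ :=
  Matrix.of fun i j => if 0 < W.mulVec v i then W i j else 0

/-- Weight Distribution Condition with constant `ε`. -/
def WDC {a k : ℕ} (W : Matrix (Fin a) (Fin k) ℝ) (ε : ℝ) : Prop :=
  ∀ x y : Fin k → ℝ, x ≠ 0 → y ≠ 0 →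
    specNorm ((posPart W x)ᵀ * posPart W y - Qmat x y) ≤ ε

/-- `A_z = diag(sgn(Az))·A`. -/
def signedMat {a b : ℕ} (A : Matrix (Fin a) (Fin b) ℝ) (z : Fin b → ℝ) :
    Matrix (Fin a) (Fin b) ℝ :=
  Matrix.of fun i j => Real.sign (A.mulVec z i) * A i j

/-- Entrywise ReLU. -/
def reluV {a : ℕ} (v : Fin a → ℝ) : Fin a → ℝ := fun i => max (v i) 0

/-- Entrywise absolute value. -/
def absV {a : ℕ} (v : Fin a → ℝ) : Fin a → ℝ := fun i => |v i|

/-- The `d`-layer ReLU network `G(x) = relu(W_d ⋯ relu(W_1 x) ⋯)`. -/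
def net (n : ℕ → ℕ) (W : ∀ i : ℕ, Matrix (Fin (n (i + 1))) (Fin (n i)) ℝ) :
    (d : ℕ) → (Fin (n 0) → ℝ) → Fin (n d) → ℝ
  | 0, x => x
  | d + 1, x => reluV ((W d).mulVec (net n W d x))

/-- The product `Π_{i=d}^1 W_{i,+,x}`. -/
def layerProd (n : ℕ → ℕ) (W : ∀ i : ℕ, Matrix (Fin (n (i + 1))) (Fin (n i)) ℝ) :
    (d : ℕ) → (Fin (n 0) → ℝ) → Matrix (Fin (n d)) (Fin (n 0)) ℝ
  | 0, _ => 1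
  | d + 1, x => posPart (W d) ((layerProd n W d x).mulVec x) * layerProd n W d x

/-- The matrix `W_{i+1,+,x}` (the `(i+1)`-st layer, zero-indexed as `i`). -/
def layerPos (n : ℕ → ℕ) (W : ∀ i : ℕ, Matrix (Fin (n (i + 1))) (Fin (n i)) ℝ)
    (i : ℕ) (x : Fin (n 0) → ℝ) : Matrix (Fin (n (i + 1))) (Fin (n i)) ℝ :=
  posPart (W i) ((layerProd n W i x).mulVec x)

/-- `g(θ) = arccos((cos θ·(π − θ) + sin θ)/π)`. -/
def gfun (θ : ℝ) : ℝ := Real.arccos ((Real.cos θ * (π - θ) + Real.sin θ) / π)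

/-- The sequence `θ_0 = θ₀`, `θ_{i+1} = g(θ_i)`. -/
def thetaSeq (θ₀ : ℝ) : ℕ → ℝ
  | 0 => θ₀
  | i + 1 => gfun (thetaSeq θ₀ i)

/-- `ρ_d`. -/
def rho (d : ℕ) : ℝ :=
  -(2 * Real.sin (thetaSeq π d)) / π +
    ((π - 2 * thetaSeq π d) / π) *
      ∑ i ∈ Finset.range d,
        (Real.sin (thetaSeq π i) / π) * ∏ j ∈ Finset.Ico (i + 1) d, (π - thetaSeq π j) / π

/-- The vector `h_{x,y}`. -/
def hvec (d : ℕ) {k : ℕ} (x y : Fin k → ℝ) : Fin k → ℝ :=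
  (-(nrm y / 2 ^ d) * ((π - 2 * thetaSeq (angl x y) d) / π) *
      ∏ i ∈ Finset.range d, (π - thetaSeq (angl x y) i) / π) • ((nrm y)⁻¹ • y) +
    ((1 / 2 ^ d) *
        (nrm x -
          nrm y *
            (2 * Real.sin (thetaSeq (angl x y) d) / π -
              ((π - 2 * thetaSeq (angl x y) d) / π) *
                ∑ i ∈ Finset.range d,
                  (Real.sin (thetaSeq (angl x y) i) / π) *
                    ∏ j ∈ Finset.Ico (i + 1) d, (π - thetaSeq (angl x y) j) / π))) •
      ((nrm x)⁻¹ • x)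

/-- The vector `h̃_{x,y}`. -/
def htil (d : ℕ) {k : ℕ} (x y : Fin k → ℝ) : Fin k → ℝ :=
  (1 / 2 ^ d) •
    ((∏ i ∈ Finset.range d, (π - thetaSeq (angl x y) i) / π) • y +
      (∑ i ∈ Finset.range d,
          (Real.sin (thetaSeq (angl x y) i) / π) *
            ∏ j ∈ Finset.Ico (i + 1) d, (π - thetaSeq (angl x y) j) / π) •
        ((nrm y / nrm x) • x))

/-- The set `S_{ε,x₀}`. -/
def Sset (d : ℕ) {k : ℕ} (ε : ℝ) (x₀ : Fin k → ℝ) : Set (Fin k → ℝ) :=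
  {x | x ≠ 0 ∧ nrm (hvec d x x₀) ≤ ε / 2 ^ d * max (nrm x) (nrm x₀)}

/-- The vector `v̄_{x,y}`. -/
def vbar (n : ℕ → ℕ) (W : ∀ i : ℕ, Matrix (Fin (n (i + 1))) (Fin (n i)) ℝ) (d : ℕ)
    (x y : Fin (n 0) → ℝ) : Fin (n 0) → ℝ :=
  (layerProd n W d x)ᵀ.mulVec ((layerProd n W d x).mulVec x) -
    (layerProd n W d x)ᵀ.mulVec
      ((Phi ((layerProd n W d x).mulVec x) ((layerProd n W d y).mulVec y)).mulVec
        ((layerProd n W d y).mulVec y))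

/-- The objective `f(x) = (1/2)·‖ |A G(x)| − |A G(x₀)| ‖²`. -/
def objf (n : ℕ → ℕ) (W : ∀ i : ℕ, Matrix (Fin (n (i + 1))) (Fin (n i)) ℝ) (d m : ℕ)
    (A : Matrix (Fin m) (Fin (n d)) ℝ) (x₀ x : Fin (n 0) → ℝ) : ℝ :=
  (1 / 2) * nrm (absV (A.mulVec (net n W d x)) - absV (A.mulVec (net n W d x₀))) ^ 2

/-- One-sided directional derivative `D_v f(x) = L`. -/
def HasDirDeriv {k : ℕ} (f : (Fin k → ℝ) → ℝ) (x v : Fin k → ℝ) (L : ℝ) : Prop :=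
  Filter.Tendsto (fun t : ℝ => (f (x + t • v) - f x) / t) (nhdsWithin 0 (Set.Ioi 0)) (nhds L)

/-- Range Restricted Concentration Property with constant `ε`. -/
def RRCP (n : ℕ → ℕ) (W : ∀ i : ℕ, Matrix (Fin (n (i + 1))) (Fin (n i)) ℝ) (d m : ℕ)
    (A : Matrix (Fin m) (Fin (n d)) ℝ) (ε : ℝ) : Prop :=
  ∀ x y x₁ x₂ x₃ x₄ : Fin (n 0) → ℝ, x ≠ 0 → y ≠ 0 →
    |dotp
        ((((signedMat A (net n W d x))ᵀ * signedMat A (net n W d y)) -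
              Phi (net n W d x) (net n W d y)).mulVec
          (net n W d x₁ - net n W d x₂))
        (net n W d x₃ - net n W d x₄)| ≤
      7 * ε * nrm (net n W d x₁ - net n W d x₂) * nrm (net n W d x₃ - net n W d x₄)

/-- Law of an `a × b` matrix with i.i.d. `N(0, v)` entries. -/
def gaussMatrix (a b : ℕ) (v : ℝ≥0) : Measure (Fin a → Fin b → ℝ) :=
  Measure.pi fun _ : Fin a => Measure.pi fun _ : Fin b => gaussianReal 0 v

instance (a b : ℕ) (v : ℝ≥0) : IsProbabilityMeasure (gaussMatrix a b v) := by
  unfold gaussMatrix; infer_instance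

/-- Extend a `Fin d`-indexed family of weight matrices to an `ℕ`-indexed one. -/
def extW (d : ℕ) (n : ℕ → ℕ)
    (ω : ∀ i : Fin d, Fin (n (i.1 + 1)) → Fin (n i.1) → ℝ) (i : ℕ) :
    Matrix (Fin (n (i + 1))) (Fin (n i)) ℝ :=
  if h : i < d then Matrix.of (ω ⟨i, h⟩) else 0

/-- Joint law of the `d` Gaussian weight matrices (variances `1/n_i`) and the
Gaussian measurement matrix (variance `1/m`). -/
def netMeasure (d m : ℕ) (n : ℕ → ℕ) :
    Measure ((∀ i : Fin d, Fin (n (i.1 + 1)) → Fin (n i.1) → ℝ) × (Fin m → Fin (n d) → ℝ)) :=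
  (Measure.pi fun i : Fin d => gaussMatrix (n (i.1 + 1)) (n i.1) ((n (i.1 + 1) : ℝ≥0))⁻¹).prod
    (gaussMatrix m (n d) ((m : ℝ≥0))⁻¹)

/-- The geometric conclusion: outside two small balls around `x₀` and `−ρ_d·x₀`
there is a descent direction, and the origin is a local maximum direction-wise. -/
def DescentConcl (n : ℕ → ℕ) (W : ∀ i : ℕ, Matrix (Fin (n (i + 1))) (Fin (n i)) ℝ)
    (d m : ℕ) (A : Matrix (Fin m) (Fin (n d)) ℝ) (ε K₂ : ℝ) : Prop :=
  ∀ x₀ : Fin (n 0) → ℝ, x₀ ≠ 0 →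
    (∀ x : Fin (n 0) → ℝ, x ≠ 0 →
        ¬nrm (x - x₀) < K₂ * (d : ℝ) ^ 3 * ε ^ ((1 : ℝ) / 4) * nrm x₀ →
        ¬nrm (x + rho d • x₀) < K₂ * (d : ℝ) ^ 14 * ε ^ ((1 : ℝ) / 4) * nrm x₀ →
        ∃ v : Fin (n 0) → ℝ, ∃ L : ℝ,
          L < 0 ∧ HasDirDeriv (objf n W d m A x₀) x (-v) L) ∧
    ∀ x : Fin (n 0) → ℝ, x ≠ 0 →
      ∃ L : ℝ, L < 0 ∧ HasDirDeriv (objf n W d m A x₀) 0 x L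

/-!
For `z ≠ 0` the angle `θ_{z,z}` vanishes, so `Q_{z,z} = I/2` and the WDC says that one layer
multiplies `‖z‖²` by a factor in `[1/2 - ε, 1/2 + ε]`. Hence `‖x_d‖² / ‖x‖²` and
`‖y_d‖² / ‖y‖²` both lie in `[(1/2 - ε)^d, (1/2 + ε)^d]`, and by Bernoulli's inequality
`(1 - 8dε)(1/2 + ε)^d ≤ (1/2 - ε)^d`. So the squared ratio `‖y_d‖² / ‖x_d‖²` is within a factor
`1 - 8dε` of `‖y‖² / ‖x‖²` in both directions, and taking square roots gives the claim.
-/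

lemma nrm_eq_norm {m : ℕ} (v : Fin m → ℝ) : nrm v = ‖WithLp.toLp 2 v‖ := by
  rw [EuclideanSpace.norm_eq, nrm, dotp]
  simp [sq]

lemma dotp_eq_inner {m : ℕ} (u v : Fin m → ℝ) :
    dotp u v = inner ℝ (WithLp.toLp 2 u) (WithLp.toLp 2 v) := by
  simp [dotp, PiLp.inner_apply, mul_comm]

lemma nrm_sq {m : ℕ} (v : Fin m → ℝ) : nrm v ^ 2 = dotp v v := by
  rw [nrm_eq_norm, dotp_eq_inner, real_inner_self_eq_norm_sq]

lemma nrm_nonneg {m : ℕ} (v : Fin m → ℝ) : 0 ≤ nrm v := Real.sqrt_nonneg _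

lemma nrm_pos {m : ℕ} {v : Fin m → ℝ} (hv : v ≠ 0) : 0 < nrm v := by
  rw [nrm_eq_norm, norm_pos_iff]
  exact fun h => hv (by simpa using congrArg WithLp.ofLp h)

lemma abs_dotp_mulVec_le {a b : ℕ} (M : Matrix (Fin a) (Fin b) ℝ)
    (u : Fin a → ℝ) (v : Fin b → ℝ) :
    |dotp u (M *ᵥ v)| ≤ specNorm M * nrm u * nrm v := by
  rw [dotp_eq_inner, nrm_eq_norm, nrm_eq_norm]
  have hM : ‖WithLp.toLp 2 (M *ᵥ v)‖ ≤ specNorm M * ‖WithLp.toLp 2 v‖ :=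
    (LinearMap.toContinuousLinearMap (Matrix.toEuclideanLin M)).le_opNorm _
  calc |inner ℝ (WithLp.toLp 2 u) (WithLp.toLp 2 (M *ᵥ v))|
      ≤ ‖WithLp.toLp 2 u‖ * ‖WithLp.toLp 2 (M *ᵥ v)‖ := abs_real_inner_le_norm _ _
    _ ≤ ‖WithLp.toLp 2 u‖ * (specNorm M * ‖WithLp.toLp 2 v‖) := by gcongr
    _ = _ := by ring

lemma Qmat_self {m : ℕ} {z : Fin m → ℝ} (hz : z ≠ 0) :
    Qmat z z = (1 / 2 : ℝ) • (1 : Matrix (Fin m) (Fin m) ℝ) := by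
  have hangle : angl z z = 0 := by
    rw [angl, ← sq, nrm_sq, div_self (nrm_sq z ▸ pow_pos (nrm_pos hz) 2).ne', Real.arccos_one]
  rw [Qmat, hangle, Real.sin_zero, zero_div, zero_smul, add_zero, sub_zero,
    div_mul_cancel_right₀ Real.pi_ne_zero, one_div]

lemma WDC.abs_nrm_sq_posPart_sub_le {a k : ℕ} {W : Matrix (Fin a) (Fin k) ℝ} {ε : ℝ}
    (hW : WDC W ε) (z : Fin k → ℝ) :
    |nrm (posPart W z *ᵥ z) ^ 2 - nrm z ^ 2 / 2| ≤ ε * nrm z ^ 2 := by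
  rcases eq_or_ne z 0 with rfl | hz
  · simp [nrm, dotp]
  set A := posPart W z
  have hdiff : nrm (A *ᵥ z) ^ 2 - nrm z ^ 2 / 2 = dotp z ((Aᵀ * A - Qmat z z) *ᵥ z) := by
    rw [nrm_sq, nrm_sq, Qmat_self hz]
    change (A *ᵥ z) ⬝ᵥ (A *ᵥ z) - z ⬝ᵥ z / 2 = z ⬝ᵥ ((Aᵀ * A - (1 / 2 : ℝ) • 1) *ᵥ z)
    rw [Matrix.sub_mulVec, ← Matrix.mulVec_mulVec, dotProduct_sub, Matrix.dotProduct_mulVec z Aᵀ,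
      Matrix.vecMul_transpose, Matrix.smul_mulVec, Matrix.one_mulVec, dotProduct_smul,
      smul_eq_mul]
    ring
  calc |nrm (A *ᵥ z) ^ 2 - nrm z ^ 2 / 2|
      ≤ specNorm (Aᵀ * A - Qmat z z) * nrm z * nrm z := hdiff ▸ abs_dotp_mulVec_le _ z z
    _ ≤ ε * nrm z * nrm z := by
        gcongr
        exacts [nrm_nonneg z, nrm_nonneg z, hW z z hz hz]
    _ = ε * nrm z ^ 2 := by ring

section Layers

variable {n : ℕ → ℕ} {W : ∀ i : ℕ, Matrix (Fin (n (i + 1))) (Fin (n i)) ℝ}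

lemma layerProd_succ_mulVec (i : ℕ) (x : Fin (n 0) → ℝ) :
    layerProd n W (i + 1) x *ᵥ x =
      posPart (W i) (layerProd n W i x *ᵥ x) *ᵥ (layerProd n W i x *ᵥ x) := by
  rw [layerProd, ← Matrix.mulVec_mulVec]

lemma pow_mul_nrm_sq_le_layerProd {d : ℕ} {ε : ℝ} (hε : ε ≤ 1 / 2)
    (hW : ∀ i < d, WDC (W i) ε) (x : Fin (n 0) → ℝ) :
    (1 / 2 - ε) ^ d * nrm x ^ 2 ≤ nrm (layerProd n W d x *ᵥ x) ^ 2 := by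
  have hstep : ∀ i < d, (1 / 2 - ε) * nrm (layerProd n W i x *ᵥ x) ^ 2 ≤
      nrm (layerProd n W (i + 1) x *ᵥ x) ^ 2 := fun i hi => by
    have := (hW i hi).abs_nrm_sq_posPart_sub_le (layerProd n W i x *ᵥ x)
    rw [layerProd_succ_mulVec]
    linarith [(abs_le.mp this).1]
  simpa [layerProd] using geom_le (by linarith) d hstep

lemma nrm_sq_layerProd_le_pow_mul {d : ℕ} {ε : ℝ} (hε : -(1 / 2) ≤ ε)
    (hW : ∀ i < d, WDC (W i) ε) (x : Fin (n 0) → ℝ) :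
    nrm (layerProd n W d x *ᵥ x) ^ 2 ≤ (1 / 2 + ε) ^ d * nrm x ^ 2 := by
  have hstep : ∀ i < d, nrm (layerProd n W (i + 1) x *ᵥ x) ^ 2 ≤
      (1 / 2 + ε) * nrm (layerProd n W i x *ᵥ x) ^ 2 := fun i hi => by
    have := (hW i hi).abs_nrm_sq_posPart_sub_le (layerProd n W i x *ᵥ x)
    rw [layerProd_succ_mulVec]
    linarith [(abs_le.mp this).2]
  simpa [layerProd] using
    le_geom (u := fun i => nrm (layerProd n W i x *ᵥ x) ^ 2) (by linarith) d hstep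

end Layers

lemma one_sub_mul_mul_pow_le_pow {a b s : ℝ} (hs : s ≤ 1) (hb : 0 ≤ b)
    (hab : (1 - s) * b ≤ a) (d : ℕ) : (1 - d * s) * b ^ d ≤ a ^ d :=
  calc (1 - d * s) * b ^ d ≤ (1 - s) ^ d * b ^ d := by
        gcongr
        simpa [sub_eq_add_neg] using one_add_mul_le_pow (a := -s) (by linarith) d
    _ = ((1 - s) * b) ^ d := (mul_pow _ _ _).symm
    _ ≤ a ^ d := by gcongr

lemma abs_sub_le_mul_of_sq_le {ρ r t : ℝ} (hρ : 0 ≤ ρ) (hr : 0 ≤ r) (ht0 : 0 ≤ t)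
    (ht : t ≤ 1 / 2) (hlo : (1 - t) * r ^ 2 ≤ ρ ^ 2) (hhi : (1 - t) * ρ ^ 2 ≤ r ^ 2) :
    |ρ - r| ≤ t * r := by
  have h1t : 0 < 1 - t := by linarith
  have hupper : ρ ≤ (1 + t) * r := by
    -- `(1 - t) * (1 + t) ^ 2 - 1 = t * (1 - t - t ^ 2)`
    have hcubic : 0 ≤ t * (1 - t - t ^ 2) * r ^ 2 := by
      have : 0 ≤ 1 - t - t ^ 2 := by nlinarith
      positivity
    have hsq : (1 - t) * ρ ^ 2 ≤ (1 - t) * ((1 + t) * r) ^ 2 := by linarith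
    exact (pow_le_pow_iff_left₀ hρ (by positivity) two_ne_zero).mp
      (le_of_mul_le_mul_left hsq h1t)
  have hlower : (1 - t) * r ≤ ρ := by
    have hsq : ((1 - t) * r) ^ 2 ≤ ρ ^ 2 := by nlinarith
    exact (pow_le_pow_iff_left₀ (by positivity) hρ two_ne_zero).mp hsq
  rw [abs_sub_le_iff]
  constructor <;> linarith

lemma abs_div_sub_div_le_of_sq_bounds {a b p q c C t : ℝ} (ha : 0 ≤ a) (hb : 0 ≤ b)
    (hp : 0 < p) (hq : 0 < q) (hc : 0 < c) (ha_lo : c * p ^ 2 ≤ a ^ 2)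
    (ha_hi : a ^ 2 ≤ C * p ^ 2) (hb_lo : c * q ^ 2 ≤ b ^ 2) (hb_hi : b ^ 2 ≤ C * q ^ 2)
    (hcC : (1 - t) * C ≤ c) (ht0 : 0 ≤ t) (ht : t ≤ 1 / 2) :
    |b / a - q / p| ≤ t * (q / p) := by
  have hsa : 0 < a ^ 2 := lt_of_lt_of_le (by positivity) ha_lo
  have h1t : 0 ≤ 1 - t := by linarith
  apply abs_sub_le_mul_of_sq_le (div_nonneg hb ha) (by positivity) ht0 ht
  · rw [div_pow, div_pow, mul_div_assoc', div_le_div_iff₀ (by positivity) hsa]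
    nlinarith [mul_le_mul_of_nonneg_left ha_hi (by positivity : 0 ≤ (1 - t) * q ^ 2),
      mul_le_mul_of_nonneg_right hcC (by positivity : 0 ≤ q ^ 2 * p ^ 2),
      mul_le_mul_of_nonneg_right hb_lo (by positivity : 0 ≤ p ^ 2)]
  · rw [div_pow, div_pow, mul_div_assoc', div_le_div_iff₀ hsa (by positivity)]
    nlinarith [mul_le_mul_of_nonneg_left hb_hi (by positivity : 0 ≤ (1 - t) * p ^ 2),
      mul_le_mul_of_nonneg_right hcC (by positivity : 0 ≤ q ^ 2 * p ^ 2),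
      mul_le_mul_of_nonneg_right ha_lo (by positivity : 0 ≤ q ^ 2)]

lemma mul_le_one_of_lt_inv_pow_four {d : ℕ} {ε : ℝ} (hε : 0 < ε)
    (h : ε < ((d : ℝ) ^ 4)⁻¹ * (1 / (16 * π)) ^ 2) : 16 * d * ε ≤ 1 ∧ 8 * ε ≤ 1 := by
  have hd : (1 : ℝ) ≤ d := by
    rcases Nat.eq_zero_or_pos d with rfl | hd
    · rw [Nat.cast_zero, zero_pow four_ne_zero, _root_.inv_zero, zero_mul] at h
      linarith
    · exact_mod_cast hd
  have hπ : (1 / (16 * π)) ^ 2 ≤ 1 / 256 := by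
    rw [div_pow, one_pow, mul_pow]
    gcongr
    nlinarith [Real.pi_gt_three]
  have hd4 : (d : ℝ) ^ 4 * ε < 1 / 256 :=
    ((lt_inv_mul_iff₀ (by positivity)).mp h).trans_le hπ
  have hdd4 : (d : ℝ) ≤ d ^ 4 := le_self_pow₀ hd (by norm_num)
  constructor <;> nlinarith

theorem statement6_general (d : ℕ) (ε : ℝ) (hε0 : 0 < ε)
    (hε1 : ε < ((d : ℝ) ^ 4)⁻¹ * (1 / (16 * π)) ^ 2)
    (n : ℕ → ℕ)
    (W : ∀ i : ℕ, Matrix (Fin (n (i + 1))) (Fin (n i)) ℝ)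
    (hW : ∀ i < d, WDC (W i) ε) :
    ∀ x y : Fin (n 0) → ℝ, x ≠ 0 → y ≠ 0 →
      |nrm ((layerProd n W d y).mulVec y) / nrm ((layerProd n W d x).mulVec x) -
          nrm y / nrm x| ≤
        8 * d * ε * (nrm y / nrm x) := by
  intro x y hx hy
  obtain ⟨hdε, hε⟩ := mul_le_one_of_lt_inv_pow_four hε0 hε1
  have hcontract : (1 - 8 * d * ε) * (1 / 2 + ε) ^ d ≤ (1 / 2 - ε) ^ d := by
    have := one_sub_mul_mul_pow_le_pow (a := 1 / 2 - ε) (b := 1 / 2 + ε) (s := 8 * ε) hε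
      (by linarith) (by nlinarith) d
    rwa [← mul_assoc, mul_comm (d : ℝ) 8] at this
  exact abs_div_sub_div_le_of_sq_bounds (nrm_nonneg _) (nrm_nonneg _) (nrm_pos hx) (nrm_pos hy)
    (pow_pos (by linarith) d)
    (pow_mul_nrm_sq_le_layerProd (by linarith) hW x)
    (nrm_sq_layerProd_le_pow_mul (by linarith) hW x)
    (pow_mul_nrm_sq_le_layerProd (by linarith) hW y)
    (nrm_sq_layerProd_le_pow_mul (by linarith) hW y)
    hcontract (by positivity) (by linarith)

/-- under the WDC, the ratio of output norms concentrates around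
the ratio of input norms. -/
theorem statement6 (d : ℕ) (hd : 2 ≤ d) (ε : ℝ) (hε0 : 0 < ε)
    (hε1 : ε < ((d : ℝ) ^ 4)⁻¹ * (1 / (16 * π)) ^ 2)
    (n : ℕ → ℕ) (hn : ∀ i < d, n i < n (i + 1))
    (W : ∀ i : ℕ, Matrix (Fin (n (i + 1))) (Fin (n i)) ℝ)
    (hW : ∀ i < d, WDC (W i) ε) :
    ∀ x y : Fin (n 0) → ℝ, x ≠ 0 → y ≠ 0 →
      |nrm ((layerProd n W d y).mulVec y) / nrm ((layerProd n W d x).mulVec x) -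
          nrm y / nrm x| ≤
        8 * d * ε * (nrm y / nrm x) :=
  statement6_general d ε hε0 hε1 n W hW
end DPR
end
end

section
/- Let d ≥ 2, let 0 < ε < 1/4 satisfy 24·π·d⁶·√ε ≤ 1, and fix nonzero x₀ ∈ ℝ^k. Then every x ∈ S_{ε,x₀} satisfies ‖x‖ ≤ 6·d·‖x₀‖; in particular max(‖x‖, ‖x₀‖) ≤ 6·d·‖x₀‖ for all x ∈ S_{ε,x₀}. -/
open Real Filter Set MeasureTheory ProbabilityTheory Matrix
open scoped Classical BigOperators NNReal ENNReal

noncomputable section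

namespace DPR

/-! Write `h_{x,x₀} = a·x̂₀ + b·x̂`. Since every angle `θ̄_i` lies in `[0, π]`, all the factors
`(π − θ̄_i)/π`, `(π − 2θ̄_d)/π` and `sin θ̄_i/π` have absolute value at most one and the sum in
`h_{x,x₀}` is at most `d`, so `|a| ≤ ‖x₀‖/2^d` and `b ≥ (‖x‖ − (d+1)‖x₀‖)/2^d`. Hence
`2^d‖h_{x,x₀}‖ ≥ ‖x‖ − (d+2)‖x₀‖`, and on `S_{ε,x₀}` this is at most `ε·max(‖x‖, ‖x₀‖)` with
`ε < 1/4`, which forces `‖x‖ ≤ (4/3)(d+2)‖x₀‖ ≤ 6d‖x₀‖`. -/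

lemma nrm_eq_norm_toLp {k : ℕ} (v : Fin k → ℝ) : nrm v = ‖WithLp.toLp 2 v‖ := by
  rw [EuclideanSpace.norm_eq, nrm, dotp]
  congr 1
  exact Finset.sum_congr rfl fun i _ => by simp [sq]

lemma nrm_smul {k : ℕ} (c : ℝ) (v : Fin k → ℝ) : nrm (c • v) = |c| * nrm v := by
  simp only [nrm_eq_norm_toLp, WithLp.toLp_smul, norm_smul, Real.norm_eq_abs]

lemma nrm_inv_smul_self {k : ℕ} {v : Fin k → ℝ} (hv : v ≠ 0) : nrm ((nrm v)⁻¹ • v) = 1 := by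
  have hpos : 0 < nrm v := by
    rw [nrm_eq_norm_toLp]
    exact norm_pos_iff.2 fun h => hv (by simpa using congrArg WithLp.ofLp h)
  rw [nrm_smul, abs_of_pos (inv_pos.2 hpos), inv_mul_cancel₀ hpos.ne']

lemma nrm_inv_smul_self_le_one {k : ℕ} (v : Fin k → ℝ) : nrm ((nrm v)⁻¹ • v) ≤ 1 := by
  by_cases hv : v = 0
  · simp [hv, nrm_eq_norm_toLp]
  · exact (nrm_inv_smul_self hv).le

lemma abs_sub_abs_le_nrm_smul_add_smul {k : ℕ} {u w : Fin k → ℝ} (hu : nrm u ≤ 1)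
    (hw : nrm w = 1) (a b : ℝ) : |b| - |a| ≤ nrm (a • u + b • w) := by
  have htri : nrm (b • w) ≤ nrm (a • u + b • w) + nrm (a • u) := by
    simp only [nrm_eq_norm_toLp, WithLp.toLp_add]
    simpa using norm_sub_le (WithLp.toLp 2 (a • u + b • w)) (WithLp.toLp 2 (a • u))
  rw [nrm_smul, nrm_smul, hw] at htri
  nlinarith [abs_nonneg a]

lemma angl_mem_Icc {k : ℕ} (u v : Fin k → ℝ) : angl u v ∈ Icc 0 π :=
  ⟨arccos_nonneg _, arccos_le_pi _⟩

lemma thetaSeq_mem_Icc {θ₀ : ℝ} (h : θ₀ ∈ Icc 0 π) : ∀ i, thetaSeq θ₀ i ∈ Icc 0 π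
  | 0 => h
  | _ + 1 => ⟨arccos_nonneg _, arccos_le_pi _⟩

section ThetaBounds

variable {θ : ℕ → ℝ}

lemma prod_pi_sub_div_pi_mem_Icc (hθ : ∀ i, θ i ∈ Icc 0 π) (s : Finset ℕ) :
    ∏ j ∈ s, (π - θ j) / π ∈ Icc 0 1 := by
  have hfac : ∀ j, (π - θ j) / π ∈ Icc 0 1 := fun j =>
    ⟨div_nonneg (by linarith [(hθ j).2]) pi_pos.le,
      div_le_one_of_le₀ (by linarith [(hθ j).1]) pi_pos.le⟩
  exact ⟨Finset.prod_nonneg fun j _ => (hfac j).1,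
    Finset.prod_le_one (fun j _ => (hfac j).1) fun j _ => (hfac j).2⟩

lemma abs_pi_sub_two_mul_div_pi_le_one (hθ : ∀ i, θ i ∈ Icc 0 π) (i : ℕ) :
    |(π - 2 * θ i) / π| ≤ 1 := by
  rw [abs_div, abs_of_pos pi_pos, div_le_one pi_pos, abs_le]
  constructor <;> linarith [(hθ i).1, (hθ i).2]

lemma sum_sin_div_pi_mul_prod_mem_Icc (hθ : ∀ i, θ i ∈ Icc 0 π) (d : ℕ) :
    ∑ i ∈ Finset.range d, (sin (θ i) / π) * ∏ j ∈ Finset.Ico (i + 1) d, (π - θ j) / π ∈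
      Icc 0 (d : ℝ) := by
  have hterm : ∀ i, (sin (θ i) / π) * ∏ j ∈ Finset.Ico (i + 1) d, (π - θ j) / π ∈ Icc 0 1 := by
    intro i
    have hsin : sin (θ i) / π ∈ Icc 0 1 :=
      ⟨div_nonneg (sin_nonneg_of_nonneg_of_le_pi (hθ i).1 (hθ i).2) pi_pos.le,
        div_le_one_of_le₀ ((sin_le_one _).trans (by linarith [pi_gt_three])) pi_pos.le⟩
    have hprod := prod_pi_sub_div_pi_mem_Icc hθ (Finset.Ico (i + 1) d)
    exact ⟨mul_nonneg hsin.1 hprod.1, mul_le_one₀ hsin.2 hprod.1 hprod.2⟩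
  refine ⟨Finset.sum_nonneg fun i _ => (hterm i).1, ?_⟩
  simpa using Finset.sum_le_sum fun i (_ : i ∈ Finset.range d) => (hterm i).2

end ThetaBounds

lemma le_nrm_hvec (d : ℕ) {k : ℕ} {x : Fin k → ℝ} (x₀ : Fin k → ℝ) (hx : x ≠ 0) :
    (nrm x - (d + 2) * nrm x₀) / 2 ^ d ≤ nrm (hvec d x x₀) := by
  have hθ := thetaSeq_mem_Icc (angl_mem_Icc x x₀)
  refine le_trans ?_ (abs_sub_abs_le_nrm_smul_add_smul
    (nrm_inv_smul_self_le_one x₀) (nrm_inv_smul_self hx) _ _)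
  set θ := thetaSeq (angl x x₀)
  set T := (π - 2 * θ d) / π
  set P := ∏ i ∈ Finset.range d, (π - θ i) / π
  set S := ∑ i ∈ Finset.range d, (sin (θ i) / π) * ∏ j ∈ Finset.Ico (i + 1) d, (π - θ j) / π
  have hP := prod_pi_sub_div_pi_mem_Icc hθ (Finset.range d)
  have hT := abs_pi_sub_two_mul_div_pi_le_one hθ d
  have hS := sum_sin_div_pi_mul_prod_mem_Icc hθ d
  have hsin : 2 * sin (θ d) / π ≤ 1 := by
    rw [div_le_one pi_pos]
    linarith [sin_le_one (θ d), pi_gt_three]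
  have hx₀ : 0 ≤ nrm x₀ := sqrt_nonneg _
  have h2d : (0 : ℝ) < 2 ^ d := by positivity
  have ha : |-(nrm x₀ / 2 ^ d) * T * P| ≤ nrm x₀ / 2 ^ d := by
    rw [abs_mul, abs_mul, abs_neg, abs_of_nonneg (by positivity : 0 ≤ nrm x₀ / 2 ^ d),
      abs_of_nonneg hP.1, mul_assoc]
    exact mul_le_of_le_one_right (by positivity) (mul_le_one₀ hT hP.1 hP.2)
  have hc : 2 * sin (θ d) / π - T * S ≤ d + 1 := by
    nlinarith [mul_nonneg (by linarith [(abs_le.1 hT).1] : 0 ≤ 1 + T) hS.1, hS.2]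
  have hb : (nrm x - (d + 1) * nrm x₀) / 2 ^ d ≤
      1 / 2 ^ d * (nrm x - nrm x₀ * (2 * sin (θ d) / π - T * S)) := by
    rw [one_div_mul_eq_div]
    exact div_le_div_of_nonneg_right (by linarith [mul_le_mul_of_nonneg_left hc hx₀]) h2d.le
  have hsplit : (nrm x - (d + 2) * nrm x₀) / 2 ^ d =
      (nrm x - (d + 1) * nrm x₀) / 2 ^ d - nrm x₀ / 2 ^ d := by ring
  linarith [le_abs_self (1 / 2 ^ d * (nrm x - nrm x₀ * (2 * sin (θ d) / π - T * S)))]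

lemma le_mul_of_sub_le_mul_max {r s ε d : ℝ} (hs : 0 ≤ s) (hε : ε < 1 / 4) (hd : 1 ≤ d)
    (h : r - (d + 2) * s ≤ ε * max r s) : r ≤ 6 * d * s := by
  rcases le_total r s with hrs | hsr
  · nlinarith
  · rw [max_eq_left hsr] at h
    nlinarith

theorem statement19_general (d : ℕ) (hd : 2 ≤ d) (ε : ℝ) (hε1 : ε < 1 / 4)
    {k : ℕ} (x₀ : Fin k → ℝ) :
    ∀ x ∈ Sset d ε x₀,
      nrm x ≤ 6 * d * nrm x₀ ∧ max (nrm x) (nrm x₀) ≤ 6 * d * nrm x₀ := by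
  rintro x ⟨hx, hS⟩
  have hd1 : (1 : ℝ) ≤ d := Nat.one_le_cast.2 (by omega)
  have hx₀ : 0 ≤ nrm x₀ := sqrt_nonneg _
  have key : nrm x - (d + 2) * nrm x₀ ≤ ε * max (nrm x) (nrm x₀) := by
    have := (le_nrm_hvec d x₀ hx).trans hS
    rwa [div_mul_eq_mul_div, div_le_div_iff_of_pos_right (by positivity)] at this
  have hbound := le_mul_of_sub_le_mul_max hx₀ hε1 hd1 key
  exact ⟨hbound, max_le hbound (le_mul_of_one_le_left hx₀ (by linarith))⟩

/-- every point of `S_{ε,x₀}` has norm at most `6d‖x₀‖`. -/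
theorem statement19 (d : ℕ) (hd : 2 ≤ d) (ε : ℝ) (hε0 : 0 < ε) (hε1 : ε < 1 / 4)
    (hε2 : 24 * π * (d : ℝ) ^ 6 * Real.sqrt ε ≤ 1)
    {k : ℕ} (x₀ : Fin k → ℝ) (hx₀ : x₀ ≠ 0) :
    ∀ x ∈ Sset d ε x₀,
      nrm x ≤ 6 * d * nrm x₀ ∧ max (nrm x) (nrm x₀) ≤ 6 * d * nrm x₀ :=
  statement19_general d hd ε hε1 x₀

end DPR
end
end
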